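/- Let N ≥ 1, let x_1, …, x_N ∈ (0,1), and let ᾱ_1, …, ᾱ_N ∈ ℝ. Define w̄ : [0,1] → ℝ by w̄(x) = Σ_{j=1}^N ᾱ_j · G(x, x_j). Then w̄ is twice continuously differentiable on [0,1], satisfies w̄(0) = 0, w̄'(1) = 0 and w̄''(0) = 0, and for every twice continuously differentiable v : [0,1] → ℝ with v(0) = 0 and v'(1) = 0 one has ∫_0^1 w̄''(x) v''(x) dx = Σ_{j=1}^N ᾱ_j · v(x_j); that is, w̄ is the weak steady-state solution of the beam equation with pointwise loads ᾱ_j δ(· − x_j). -/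

import Mathlib

/-!
For fixed `ξ`, `G(·, ξ)` consists of two cubics glued at `ξ` to second order, with
`∂ₓ² G(x, ξ) = -min x ξ`; the boundary values of `w̄` are read off from these formulas.
For the weak identity, `min x ξ * v'' x` is, off the kink `x = ξ`, the derivative of the
continuous function `min x ξ * v' x - v (min x ξ)`, so `∫₀¹ min x ξ * v'' = ξ v'(1) - v ξ + v 0`,
which is `-v ξ` under the boundary conditions `v 0 = 0`, `v'(1) = 0`.
-/

open MeasureTheory Set

/-- The Green's function of the simply supported–shear hinged beam. -/
noncomputable def G (x ξ : ℝ) : ℝ :=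
  if x < ξ then -x ^ 3 / 6 + x * ξ * (1 - ξ / 2) else -ξ ^ 3 / 6 + ξ * x * (1 - x / 2)

theorem hasDerivAt_ite_lt {f g f' g' : ℝ → ℝ} {ξ : ℝ} (hf : ∀ x, HasDerivAt f (f' x) x)
    (hg : ∀ x, HasDerivAt g (g' x) x) (hfg : f ξ = g ξ) (hfg' : f' ξ = g' ξ) (x : ℝ) :
    HasDerivAt (fun y => if y < ξ then f y else g y) (if x < ξ then f' x else g' x) x := by
  rcases lt_trichotomy x ξ with hx | rfl | hx
  · rw [if_pos hx]
    refine (hf x).congr_of_eventuallyEq ?_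
    filter_upwards [Iio_mem_nhds hx] with y hy using if_pos hy
  · rw [if_neg (lt_irrefl x), ← hasDerivWithinAt_univ, ← Iic_union_Ici]
    refine HasDerivWithinAt.union ?_ ?_
    · rw [← hfg']
      refine (hf x).hasDerivWithinAt.congr (fun y hy => ?_) ((if_neg (lt_irrefl x)).trans hfg.symm)
      rcases (mem_Iic.1 hy).lt_or_eq with hy | rfl
      · exact if_pos hy
      · exact (if_neg (lt_irrefl _)).trans hfg.symm
    · exact (hg x).hasDerivWithinAt.congr (fun y hy => if_neg (not_lt.2 hy)) (if_neg (lt_irrefl x))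
  · rw [if_neg (not_lt.2 hx.le)]
    refine (hg x).congr_of_eventuallyEq ?_
    filter_upwards [Ioi_mem_nhds hx] with y hy using if_neg (not_lt.2 hy.le)

noncomputable def greenDeriv (x ξ : ℝ) : ℝ :=
  if x < ξ then -x ^ 2 / 2 + ξ * (1 - ξ / 2) else ξ * (1 - x)

theorem hasDerivAt_G (x ξ : ℝ) : HasDerivAt (G · ξ) (greenDeriv x ξ) x := by
  have hp (x : ℝ) : HasDerivAt (fun y => -y ^ 3 / 6 + y * ξ * (1 - ξ / 2))
      (-x ^ 2 / 2 + ξ * (1 - ξ / 2)) x :=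
    (((hasDerivAt_pow 3 x).neg.div_const 6).add
      (((hasDerivAt_id' x).mul_const ξ).mul_const _)).congr_deriv (by ring)
  have hq (x : ℝ) : HasDerivAt (fun y => -ξ ^ 3 / 6 + ξ * y * (1 - y / 2)) (ξ * (1 - x)) x :=
    ((((hasDerivAt_id' x).const_mul ξ).mul
      (((hasDerivAt_id' x).div_const 2).const_sub 1)).const_add _).congr_deriv (by ring)
  unfold G greenDeriv
  exact hasDerivAt_ite_lt hp hq (by ring) (by ring) x

theorem hasDerivAt_greenDeriv (x ξ : ℝ) : HasDerivAt (greenDeriv · ξ) (-min x ξ) x := by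
  have hp (x : ℝ) : HasDerivAt (fun y => -y ^ 2 / 2 + ξ * (1 - ξ / 2)) (-x) x :=
    (((hasDerivAt_pow 2 x).neg.div_const 2).add_const _).congr_deriv (by ring)
  have hq (x : ℝ) : HasDerivAt (fun y => ξ * (1 - y)) (-ξ) x :=
    (((hasDerivAt_id' x).const_sub 1).const_mul ξ).congr_deriv (by ring)
  unfold greenDeriv
  convert hasDerivAt_ite_lt hp hq (by ring) rfl x using 1
  split_ifs with h
  · rw [min_eq_left h.le]
  · rw [min_eq_right (not_lt.1 h)]

theorem contDiff_G (ξ : ℝ) : ContDiff ℝ 2 (G · ξ) := by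
  have hG : deriv (G · ξ) = (greenDeriv · ξ) := funext fun x => (hasDerivAt_G x ξ).deriv
  have hG' : deriv (greenDeriv · ξ) = fun x => -min x ξ :=
    funext fun x => (hasDerivAt_greenDeriv x ξ).deriv
  rw [show (2 : WithTop ℕ∞) = 1 + 1 from rfl, contDiff_succ_iff_deriv, hG, contDiff_one_iff_deriv,
    hG']
  exact ⟨fun x => (hasDerivAt_G x ξ).differentiableAt, by simp,
    fun x => (hasDerivAt_greenDeriv x ξ).differentiableAt, by fun_prop⟩

theorem iteratedDerivWithin_two_eq_of_hasDerivAt {f f' f'' : ℝ → ℝ} {s : Set ℝ}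
    (hs : UniqueDiffOn ℝ s) (hf : ∀ x, HasDerivAt f (f' x) x)
    (hf' : ∀ x, HasDerivAt f' (f'' x) x) {x : ℝ} (hx : x ∈ s) :
    iteratedDerivWithin 2 f s x = f'' x := by
  have h : derivWithin f s =ᶠ[nhdsWithin x s] f' :=
    eventually_nhdsWithin_of_forall fun y hy => (hf y).hasDerivWithinAt.derivWithin (hs y hy)
  rw [iteratedDerivWithin_succ, iteratedDerivWithin_one,
    h.derivWithin_eq ((hf x).hasDerivWithinAt.derivWithin (hs x hx))]
  exact (hf' x).hasDerivWithinAt.derivWithin (hs x hx)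

theorem integral_min_mul_eq {v v' v'' : ℝ → ℝ} {a b ξ : ℝ} (hξ : ξ ∈ Icc a b)
    (hv : ContinuousOn v (Icc a b)) (hv' : ContinuousOn v' (Icc a b))
    (hv'' : ContinuousOn v'' (Icc a b)) (hdv : ∀ x ∈ Ioo a b, HasDerivAt v (v' x) x)
    (hdv' : ∀ x ∈ Ioo a b, HasDerivAt v' (v'' x) x) :
    ∫ x in a..b, min x ξ * v'' x = ξ * v' b - v ξ - (a * v' a - v a) := by
  have hab : a ≤ b := hξ.1.trans hξ.2
  have hmin : Continuous (min · ξ) := by fun_prop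
  have hF : ContinuousOn (fun x => min x ξ * v' x - v (min x ξ)) (Icc a b) :=
    (hmin.continuousOn.mul hv').sub <| hv.comp hmin.continuousOn fun x hx =>
      ⟨le_min hx.1 hξ.1, (min_le_left _ _).trans hx.2⟩
  have hdF : ∀ x ∈ Ioo a b \ {ξ},
      HasDerivAt (fun x => min x ξ * v' x - v (min x ξ)) (min x ξ * v'' x) x := by
    rintro x ⟨hx, hxξ⟩
    rcases lt_or_gt_of_ne hxξ with hlt | hgt
    · have heq : (fun x => min x ξ * v' x - v (min x ξ)) =ᶠ[nhds x] fun y => y * v' y - v y := by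
        filter_upwards [Iio_mem_nhds hlt] with y hy
        rw [min_eq_left hy.le]
      rw [heq.hasDerivAt_iff, min_eq_left hlt.le]
      exact (((hasDerivAt_id' x).mul (hdv' x hx)).sub (hdv x hx)).congr_deriv (by ring)
    · have heq : (fun x => min x ξ * v' x - v (min x ξ)) =ᶠ[nhds x] fun y => ξ * v' y - v ξ := by
        filter_upwards [Ioi_mem_nhds hgt] with y hy
        rw [min_eq_right hy.le]
      rw [heq.hasDerivAt_iff, min_eq_right hgt.le]
      exact ((hdv' x hx).const_mul ξ).sub_const _
  rw [integral_eq_of_hasDerivAt_off_countable_of_le _ _ hab (countable_singleton ξ) hF hdF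
    ((hmin.continuousOn.mul hv'').intervalIntegrable_of_Icc hab), min_eq_right hξ.2,
    min_eq_left hξ.1]

theorem integral_min_mul_iteratedDerivWithin_two {v : ℝ → ℝ} {a b ξ : ℝ} (hab : a < b)
    (hξ : ξ ∈ Icc a b) (hv : ContDiffOn ℝ 2 v (Icc a b)) :
    ∫ x in a..b, min x ξ * iteratedDerivWithin 2 v (Icc a b) x =
      ξ * derivWithin v (Icc a b) b - v ξ - (a * derivWithin v (Icc a b) a - v a) := by
  have hs : UniqueDiffOn ℝ (Icc a b) := uniqueDiffOn_Icc hab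
  have hv' : ContDiffOn ℝ 1 (derivWithin v (Icc a b)) (Icc a b) := hv.derivWithin hs le_rfl
  have hderiv {f : ℝ → ℝ} (hf : ContDiffOn ℝ 1 f (Icc a b)) :
      ∀ x ∈ Ioo a b, HasDerivAt f (derivWithin f (Icc a b) x) x := fun x hx =>
    (hf.differentiableOn one_ne_zero x (Ioo_subset_Icc_self hx)).hasDerivWithinAt.hasDerivAt
      (Icc_mem_nhds hx.1 hx.2)
  refine integral_min_mul_eq hξ hv.continuousOn hv'.continuousOn
    (hv.continuousOn_iteratedDerivWithin le_rfl hs) (hderiv (hv.of_le one_le_two)) ?_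
  rw [iteratedDerivWithin_succ, iteratedDerivWithin_one]
  exact hderiv hv'

theorem integral_sum_mul_neg_min_mul_iteratedDerivWithin_two {ι : Type*} (t : Finset ι)
    (α ξ : ι → ℝ) (hξ : ∀ j, ξ j ∈ Icc (0:ℝ) 1) {v : ℝ → ℝ} (hv : ContDiffOn ℝ 2 v (Icc 0 1))
    (hv0 : v 0 = 0) (hv1 : derivWithin v (Icc 0 1) 1 = 0) :
    ∫ x in (0:ℝ)..1, (∑ j ∈ t, α j * -min x (ξ j)) * iteratedDerivWithin 2 v (Icc 0 1) x =
      ∑ j ∈ t, α j * v (ξ j) := by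
  have hv'' := hv.continuousOn_iteratedDerivWithin le_rfl (uniqueDiffOn_Icc zero_lt_one)
  simp_rw [Finset.sum_mul, mul_assoc, neg_mul, mul_neg]
  rw [intervalIntegral.integral_finsetSum fun j _ =>
    (ContinuousOn.intervalIntegrable_of_Icc zero_le_one (by fun_prop))]
  refine Finset.sum_congr rfl fun j _ => ?_
  rw [intervalIntegral.integral_neg, intervalIntegral.integral_const_mul,
    integral_min_mul_iteratedDerivWithin_two zero_lt_one (hξ j) hv, hv0, hv1]
  ring

theorem stmt16_general (N : ℕ) (xs : Fin N → ℝ)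
    (hxs : ∀ j, xs j ∈ Set.Ioo (0:ℝ) 1) (α : Fin N → ℝ) :
    ContDiffOn ℝ 2 (fun x => ∑ j, α j * G x (xs j)) (Set.Icc 0 1) ∧
    (∑ j, α j * G 0 (xs j)) = 0 ∧
    derivWithin (fun x => ∑ j, α j * G x (xs j)) (Set.Icc 0 1) 1 = 0 ∧
    iteratedDerivWithin 2 (fun x => ∑ j, α j * G x (xs j)) (Set.Icc 0 1) 0 = 0 ∧
    ∀ v : ℝ → ℝ, ContDiffOn ℝ 2 v (Set.Icc 0 1) → v 0 = 0 →
      derivWithin v (Set.Icc 0 1) 1 = 0 →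
      ∫ x in (0:ℝ)..1,
        iteratedDerivWithin 2 (fun y => ∑ j, α j * G y (xs j)) (Set.Icc 0 1) x *
          iteratedDerivWithin 2 v (Set.Icc 0 1) x
        = ∑ j, α j * v (xs j) := by
  have hs : UniqueDiffOn ℝ (Icc (0:ℝ) 1) := uniqueDiffOn_Icc zero_lt_one
  have hw' (x : ℝ) : HasDerivAt (fun x => ∑ j, α j * G x (xs j))
      (∑ j, α j * greenDeriv x (xs j)) x :=
    HasDerivAt.fun_sum fun j _ => (hasDerivAt_G x (xs j)).const_mul (α j)
  have hw'' (x : ℝ) : HasDerivAt (fun x => ∑ j, α j * greenDeriv x (xs j))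
      (∑ j, α j * -min x (xs j)) x :=
    HasDerivAt.fun_sum fun j _ => (hasDerivAt_greenDeriv x (xs j)).const_mul (α j)
  refine ⟨(ContDiff.sum fun j _ => contDiff_const.mul (contDiff_G (xs j))).contDiffOn, ?_, ?_, ?_,
    fun v hv hv0 hv1 => ?_⟩
  · simp [G, (hxs _).1]
  · rw [(hw' 1).hasDerivWithinAt.derivWithin (hs 1 (right_mem_Icc.2 zero_le_one))]
    simp [greenDeriv, not_lt.2 (hxs _).2.le]
  · rw [iteratedDerivWithin_two_eq_of_hasDerivAt hs hw' hw'' (left_mem_Icc.2 zero_le_one)]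
    simp [(hxs _).1.le]
  · rw [← integral_sum_mul_neg_min_mul_iteratedDerivWithin_two _ α xs
      (fun j => Ioo_subset_Icc_self (hxs j)) hv hv0 hv1]
    refine intervalIntegral.integral_congr fun x hx => ?_
    rw [uIcc_of_le zero_le_one] at hx
    rw [iteratedDerivWithin_two_eq_of_hasDerivAt hs hw' hw'' hx]

/-- For `x_1, …, x_N ∈ (0,1)` and `ᾱ_1, …, ᾱ_N ∈ ℝ`, the superposition
`w̄(x) = Σ_j ᾱ_j G(x, x_j)` is `C²` on `[0,1]`, satisfies `w̄(0) = w̄'(1) = w̄''(0) = 0`,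
and for every `C²` function `v` on `[0,1]` with `v(0) = 0`, `v'(1) = 0` one has
`∫_0^1 w̄'' v'' = Σ_j ᾱ_j v(x_j)`; i.e. `w̄` is the weak steady-state solution with
pointwise loads `ᾱ_j δ(· − x_j)`. -/
theorem stmt16 (N : ℕ) (hN : 1 ≤ N) (xs : Fin N → ℝ)
    (hxs : ∀ j, xs j ∈ Set.Ioo (0:ℝ) 1) (α : Fin N → ℝ) :
    ContDiffOn ℝ 2 (fun x => ∑ j, α j * G x (xs j)) (Set.Icc 0 1) ∧
    (∑ j, α j * G 0 (xs j)) = 0 ∧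
    derivWithin (fun x => ∑ j, α j * G x (xs j)) (Set.Icc 0 1) 1 = 0 ∧
    iteratedDerivWithin 2 (fun x => ∑ j, α j * G x (xs j)) (Set.Icc 0 1) 0 = 0 ∧
    ∀ v : ℝ → ℝ, ContDiffOn ℝ 2 v (Set.Icc 0 1) → v 0 = 0 →
      derivWithin v (Set.Icc 0 1) 1 = 0 →
      ∫ x in (0:ℝ)..1,
        iteratedDerivWithin 2 (fun y => ∑ j, α j * G y (xs j)) (Set.Icc 0 1) x *
          iteratedDerivWithin 2 v (Set.Icc 0 1) x
        = ∑ j, α j * v (xs j) :=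
  stmt16_general N xs hxs α
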